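/- Let H be a separable Hilbert space, k ∈ ℕ, let Π_{−k} be the set of orthogonal projectors on H of corank at most k, and let P⁺(H) be the set of positive bounded operators on H. Then the set Π_{−k}⁺ = Π_{−k} + P⁺(H) is closed in the weak operator topology: closure(Π_{−k}⁺) = Π_{−k}⁺. -/

import Mathlib

open ContinuousLinearMap

noncomputable section

variable {H : Type*} [NormedAddCommGroup H] [InnerProductSpace ℂ H] [CompleteSpace H]

/-- `P` is an orthogonal projector: self-adjoint and idempotent. -/
def IsOrthoProjector (P : H →L[ℂ] H) : Prop :=
  IsSelfAdjoint P ∧ P ∘L P = P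

/-- The corank of an operator: the dimension of its kernel, as a cardinal. -/
noncomputable def opCorank (T : H →L[ℂ] H) : Cardinal :=
  Module.rank ℂ ↥(LinearMap.ker (T : H →ₗ[ℂ] H))

/-- The set `Π₋ₖ⁺ = Π₋ₖ + P⁺(H)`: sums of an orthogonal projector of corank at most `k` and a
positive operator. -/
def corankLePlusPos (k : ℕ) : Set (H →L[ℂ] H) :=
  {T | ∃ P : H →L[ℂ] H, IsOrthoProjector P ∧ opCorank P ≤ k ∧
    ∃ N : H →L[ℂ] H, N.IsPositive ∧ T = P + N}


-- Auxiliary definitions and lemmas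
open scoped InnerProductSpace

def CondC (k : ℕ) (T : H →L[ℂ] H) : Prop :=
  ∀ W : Submodule ℂ H, Module.finrank ℂ W = k + 1 →
    ∃ x ∈ W, x ≠ 0 ∧ ‖x‖ ^ 2 ≤ T.reApplyInnerSelf x

/-- Continuity of `f ↦ ⟪y, f x⟫` on the WOT space. -/
lemma wot_continuous_inner (x y : H) :
    Continuous fun f : (H →WOT[ℂ] H) => (innerSL ℂ y) (f x) :=
  ContinuousLinearMapWOT.continuous_dual_apply x (innerSL ℂ y)

lemma wot_closure_aux (k : ℕ) (Sset : Set (H →L[ℂ] H))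
    (hpos : ∀ S ∈ Sset, S.IsPositive) (hcond : ∀ S ∈ Sset, CondC k S)
    (T : H →L[ℂ] H)
    (hw : (ContinuousLinearMapWOT.ofCLM : (H →L[ℂ] H) → H →WOT[ℂ] H) T ∈ closure ((ContinuousLinearMapWOT.ofCLM : (H →L[ℂ] H) → H →WOT[ℂ] H) '' Sset)) :
    T.IsPositive ∧ CondC k T := by
  constructor
  · -- positivity
    have hsa : ∀ x y : H, ⟪y, T x⟫_ℂ = (starRingEnd ℂ) ⟪x, T y⟫_ℂ := by
      intro x y
      have hcl : IsClosed {f : H →WOT[ℂ] H | ⟪y, f x⟫_ℂ = (starRingEnd ℂ) ⟪x, f y⟫_ℂ} := by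
        apply isClosed_eq
        · exact wot_continuous_inner x y
        · exact Complex.continuous_conj.comp (wot_continuous_inner y x)
      have hsub : (ContinuousLinearMapWOT.ofCLM : (H →L[ℂ] H) → H →WOT[ℂ] H) '' Sset ⊆
          {f : H →WOT[ℂ] H | ⟪y, f x⟫_ℂ = (starRingEnd ℂ) ⟪x, f y⟫_ℂ} := by
        rintro - ⟨S, hS, rfl⟩
        have hsym := ContinuousLinearMap.isSelfAdjoint_iff_isSymmetric.mp (hpos S hS).isSelfAdjoint
        show ⟪y, ((ContinuousLinearMapWOT.ofCLM : (H →L[ℂ] H) → H →WOT[ℂ] H) S) x⟫_ℂ =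
          (starRingEnd ℂ) ⟪x, ((ContinuousLinearMapWOT.ofCLM : (H →L[ℂ] H) → H →WOT[ℂ] H) S) y⟫_ℂ
        rw [ContinuousLinearMap.toWOT_apply, ContinuousLinearMap.toWOT_apply]
        have h1' : ⟪S x, y⟫_ℂ = ⟪x, S y⟫_ℂ := hsym x y
        rw [← h1']
        exact (inner_conj_symm y (S x)).symm
      exact closure_minimal hsub hcl hw
    have hsym : (T : H →ₗ[ℂ] H).IsSymmetric := by
      intro x y
      show ⟪T x, y⟫_ℂ = ⟪x, T y⟫_ℂ
      have h2 := congrArg (starRingEnd ℂ) (hsa x y)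
      rw [Complex.conj_conj] at h2
      rw [← h2]
      exact (inner_conj_symm (T x) y).symm
    refine ⟨hsym, ?_⟩
    intro x
    have hcl : IsClosed {f : H →WOT[ℂ] H | 0 ≤ RCLike.re ⟪x, f x⟫_ℂ} := by
      apply isClosed_le continuous_const
      exact Complex.continuous_re.comp (wot_continuous_inner x x)
    have hsub : (ContinuousLinearMapWOT.ofCLM : (H →L[ℂ] H) → H →WOT[ℂ] H) '' Sset ⊆
        {f : H →WOT[ℂ] H | 0 ≤ RCLike.re ⟪x, f x⟫_ℂ} := by
      rintro - ⟨S, hS, rfl⟩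
      show (0:ℝ) ≤ RCLike.re ⟪x, ((ContinuousLinearMapWOT.ofCLM : (H →L[ℂ] H) → H →WOT[ℂ] H) S) x⟫_ℂ
      rw [ContinuousLinearMap.toWOT_apply]
      have := (hpos S hS).2 x
      rw [ContinuousLinearMap.reApplyInnerSelf] at this
      rwa [inner_re_symm]
    have := closure_minimal hsub hcl hw
    rw [ContinuousLinearMap.reApplyInnerSelf, inner_re_symm]
    exact this
  · -- condition C
    intro W hW
    by_contra hcon
    push_neg at hcon
    haveI hWfin : FiniteDimensional ℂ W := FiniteDimensional.of_finrank_pos (by omega)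
    haveI : ProperSpace ↥W := FiniteDimensional.proper ℂ ↥W
    -- nonempty sphere
    have hWne : ∃ w0 : ↥W, ‖w0‖ = 1 := by
      have : W ≠ ⊥ := by
        intro h
        rw [h] at hW
        simp [finrank_bot] at hW
      obtain ⟨z, hzW, hzne⟩ := Submodule.exists_mem_ne_zero_of_ne_bot this
      refine ⟨(‖z‖⁻¹ : ℂ) • ⟨z, hzW⟩, ?_⟩
      have hz : ‖z‖ ≠ 0 := norm_ne_zero_iff.mpr hzne
      have h1 : ‖(⟨z, hzW⟩ : ↥W)‖ = ‖z‖ := rfl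
      rw [norm_smul, h1, norm_inv, Complex.norm_real, norm_norm]
      exact inv_mul_cancel₀ hz
    obtain ⟨w0, hw0⟩ := hWne
    -- maximum of the quadratic form on the sphere
    have hcont : Continuous fun v : ↥W => T.reApplyInnerSelf (v : H) := by
      have h1 : Continuous fun v : ↥W => (v : H) := continuous_subtype_val
      have : Continuous fun v : ↥W => ⟪T (v : H), (v : H)⟫_ℂ :=
        Continuous.inner (T.continuous.comp h1) h1
      exact Complex.continuous_re.comp this
    obtain ⟨v0, hv0mem, hv0max⟩ :=
      (isCompact_sphere (0 : ↥W) 1).exists_isMaxOn ⟨w0, by simpa using hw0⟩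
        hcont.continuousOn
    set μ : ℝ := T.reApplyInnerSelf ((v0 : ↥W) : H) with hμdef
    have hμlt : μ < 1 := by
      have hv0norm : ‖(v0 : H)‖ = 1 := by
        have := mem_sphere_zero_iff_norm.mp hv0mem
        simpa using this
      have hv0ne : (v0 : H) ≠ 0 := by
        intro h
        rw [h] at hv0norm
        simp at hv0norm
      have := hcon (v0 : H) v0.2 hv0ne
      calc μ < ‖(v0 : H)‖ ^ 2 := this
        _ = 1 := by rw [hv0norm]; norm_num
    set ε : ℝ := 1 - μ with hεdef
    have hε : 0 < ε := by simp only [hεdef]; linarith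
    set n := Module.finrank ℂ ↥W with hndef
    let b : Module.Basis (Fin n) ℂ ↥W := Module.finBasis ℂ ↥W
    let cCLM : Fin n → (↥W →L[ℂ] ℂ) := fun i => LinearMap.toContinuousLinearMap (b.coord i)
    set M : ℝ := 1 + ∑ i, ‖cCLM i‖ with hMdef
    have hM1 : 1 ≤ M := by
      have h0 : (0:ℝ) ≤ ∑ i, ‖cCLM i‖ := Finset.sum_nonneg (fun i _ => (cCLM i).opNorm_nonneg)
      simp only [hMdef]; linarith
    have hMpos : 0 < M := by linarith
    have hcoef : ∀ v : ↥W, ‖v‖ = 1 → (∑ i, ‖b.repr v i‖) ≤ M := by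
      intro v hv
      have hi : ∀ i : Fin n, ‖b.repr v i‖ ≤ ‖cCLM i‖ := by
        intro i
        have h1 : b.repr v i = cCLM i v := rfl
        rw [h1]
        calc ‖cCLM i v‖ ≤ ‖cCLM i‖ * ‖v‖ := (cCLM i).le_opNorm v
          _ = ‖cCLM i‖ := by rw [hv, mul_one]
      calc (∑ i, ‖b.repr v i‖) ≤ ∑ i, ‖cCLM i‖ := Finset.sum_le_sum (fun i _ => hi i)
        _ ≤ M := by simp only [hMdef]; linarith
    set δ : ℝ := ε / (2 * M ^ 2) with hδdef
    have hδ : 0 < δ := by positivity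
    let u : Fin n → H := fun i => ((b i : ↥W) : H)
    set U : Set (H →WOT[ℂ] H) :=
      ⋂ i, ⋂ j, {f : H →WOT[ℂ] H |
        ‖(innerSL ℂ (u j)) (f (u i)) - ⟪u j, T (u i)⟫_ℂ‖ < δ} with hUdef
    have hUopen : IsOpen U := by
      refine isOpen_iInter_of_finite fun i => isOpen_iInter_of_finite fun j => ?_
      have hc : Continuous fun f : (H →WOT[ℂ] H) =>
          ‖(innerSL ℂ (u j)) (f (u i)) - ⟪u j, T (u i)⟫_ℂ‖ :=
        ((wot_continuous_inner (u i) (u j)).sub continuous_const).norm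
      exact isOpen_lt hc continuous_const
    have hTU : (ContinuousLinearMapWOT.ofCLM : (H →L[ℂ] H) → H →WOT[ℂ] H) T ∈ U := by
      rw [hUdef]
      refine Set.mem_iInter.mpr fun i => Set.mem_iInter.mpr fun j => ?_
      show ‖(innerSL ℂ (u j)) (((ContinuousLinearMapWOT.ofCLM : (H →L[ℂ] H) → H →WOT[ℂ] H) T) (u i)) -
        ⟪u j, T (u i)⟫_ℂ‖ < δ
      rw [ContinuousLinearMap.toWOT_apply]
      have : (innerSL ℂ (u j)) (T (u i)) = ⟪u j, T (u i)⟫_ℂ := rfl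
      rw [this]
      simpa using hδ
    obtain ⟨f, hfU, hfim⟩ := mem_closure_iff.mp hw U hUopen hTU
    obtain ⟨S, hS, rfl⟩ := hfim
    have hbound : ∀ i j : Fin n, ‖⟪u j, S (u i)⟫_ℂ - ⟪u j, T (u i)⟫_ℂ‖ ≤ δ := by
      intro i j
      have h1 := Set.mem_iInter.mp (Set.mem_iInter.mp (by rwa [hUdef] at hfU) i) j
      have h2 : ‖(innerSL ℂ (u j)) (((ContinuousLinearMapWOT.ofCLM : (H →L[ℂ] H) → H →WOT[ℂ] H) S) (u i)) -
          ⟪u j, T (u i)⟫_ℂ‖ < δ := h1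
      rw [ContinuousLinearMap.toWOT_apply] at h2
      exact le_of_lt h2
    obtain ⟨x, hxW, hxne, hxS⟩ := hcond S hS W hW
    have hxnorm : ‖x‖ ≠ 0 := norm_ne_zero_iff.mpr hxne
    set c : ℂ := ((‖x‖⁻¹ : ℝ) : ℂ) with hcdef
    set y : H := c • x with hydef
    have hyW : y ∈ W := W.smul_mem _ hxW
    have hynorm : ‖y‖ = 1 := by
      rw [hydef, norm_smul, hcdef, Complex.norm_real, norm_inv, norm_norm]
      exact inv_mul_cancel₀ hxnorm
    have hSy : (1:ℝ) ≤ RCLike.re ⟪S y, y⟫_ℂ := by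
      have h1 : ⟪S y, y⟫_ℂ = (‖x‖⁻¹ * ‖x‖⁻¹ : ℝ) • ⟪S x, x⟫_ℂ := by
        rw [hydef, map_smul, inner_smul_left, inner_smul_right, hcdef]
        rw [Complex.conj_ofReal, Complex.real_smul]
        push_cast
        ring
      rw [h1, RCLike.smul_re]
      have h2 : ‖x‖ ^ 2 ≤ RCLike.re ⟪S x, x⟫_ℂ := hxS
      have h3 : (0:ℝ) < ‖x‖ := lt_of_le_of_ne (norm_nonneg x) (Ne.symm hxnorm)
      have h4 : ‖x‖⁻¹ * ‖x‖⁻¹ * ‖x‖ ^ 2 = 1 := by rw [sq]; field_simp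
      nlinarith [h2, h3, sq_nonneg (‖x‖⁻¹)]
    set vy : ↥W := ⟨y, hyW⟩ with hvydef
    have hvynorm : ‖vy‖ = 1 := hynorm
    have hTy : T.reApplyInnerSelf y ≤ μ := by
      have := hv0max (mem_sphere_zero_iff_norm.mpr hvynorm)
      exact this
    set cc : Fin n → ℂ := fun i => b.repr vy i with hccdef
    have hccM : (∑ i, ‖cc i‖) ≤ M := hcoef vy hvynorm
    have hy : y = ∑ i, cc i • u i := by
      have h1 := b.sum_repr vy
      calc y = ((vy : ↥W) : H) := rfl
        _ = ((∑ i, b.repr vy i • b i : ↥W) : H) := by rw [h1]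
        _ = ∑ i, cc i • u i := by push_cast; rfl
    set R : H →L[ℂ] H := S - T with hRdef
    have hRapp : ∀ z : H, R z = S z - T z := fun z => rfl
    have hRy : R y = ∑ i, cc i • R (u i) := by
      conv_lhs => rw [hy]
      rw [map_sum]
      simp only [map_smul]
    have hexp : ⟪y, R y⟫_ℂ = ∑ j, (starRingEnd ℂ) (cc j) * (∑ i, cc i * ⟪u j, R (u i)⟫_ℂ) := by
      calc ⟪y, R y⟫_ℂ = ⟪∑ j, cc j • u j, R y⟫_ℂ := by rw [← hy]
        _ = ∑ j, (starRingEnd ℂ) (cc j) * ⟪u j, R y⟫_ℂ := by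
            rw [sum_inner]
            exact Finset.sum_congr rfl fun j _ => inner_smul_left _ _ _
        _ = ∑ j, (starRingEnd ℂ) (cc j) * (∑ i, cc i * ⟪u j, R (u i)⟫_ℂ) := by
            refine Finset.sum_congr rfl fun j _ => ?_
            congr 1
            rw [hRy, inner_sum]
            exact Finset.sum_congr rfl fun i _ => inner_smul_right _ _ _
    have hD : ‖⟪y, R y⟫_ℂ‖ ≤ M * (M * δ) := by
      rw [hexp]
      have hstep : ∀ j : Fin n,
          ‖(starRingEnd ℂ) (cc j) * (∑ i, cc i * ⟪u j, R (u i)⟫_ℂ)‖ ≤ ‖cc j‖ * (M * δ) := by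
        intro j
        rw [norm_mul, RCLike.norm_conj]
        refine mul_le_mul_of_nonneg_left ?_ (norm_nonneg _)
        calc ‖∑ i, cc i * ⟪u j, R (u i)⟫_ℂ‖ ≤ ∑ i, ‖cc i * ⟪u j, R (u i)⟫_ℂ‖ :=
              norm_sum_le _ _
          _ ≤ ∑ i, ‖cc i‖ * δ := by
              refine Finset.sum_le_sum fun i _ => ?_
              rw [norm_mul]
              refine mul_le_mul_of_nonneg_left ?_ (norm_nonneg _)
              have h3 : ⟪u j, R (u i)⟫_ℂ = ⟪u j, S (u i)⟫_ℂ - ⟪u j, T (u i)⟫_ℂ := by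
                rw [hRapp, inner_sub_right]
              rw [h3]
              exact hbound i j
          _ = (∑ i, ‖cc i‖) * δ := by rw [Finset.sum_mul]
          _ ≤ M * δ := mul_le_mul_of_nonneg_right hccM hδ.le
      calc ‖∑ j, (starRingEnd ℂ) (cc j) * (∑ i, cc i * ⟪u j, R (u i)⟫_ℂ)‖
          ≤ ∑ j, ‖(starRingEnd ℂ) (cc j) * (∑ i, cc i * ⟪u j, R (u i)⟫_ℂ)‖ := norm_sum_le _ _
        _ ≤ ∑ j, ‖cc j‖ * (M * δ) := Finset.sum_le_sum fun j _ => hstep j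
        _ = (∑ j, ‖cc j‖) * (M * δ) := by rw [Finset.sum_mul]
        _ ≤ M * (M * δ) := by
            refine mul_le_mul_of_nonneg_right hccM ?_
            positivity
    have hMδ : M * (M * δ) = ε / 2 := by
      rw [hδdef]
      field_simp
    have h6 : ⟪y, S y⟫_ℂ - ⟪y, T y⟫_ℂ = ⟪y, R y⟫_ℂ := by
      rw [hRapp, inner_sub_right]
    have h5 : RCLike.re ⟪y, S y⟫_ℂ - RCLike.re ⟪y, T y⟫_ℂ ≤ ε / 2 := by
      have h7 : RCLike.re (⟪y, S y⟫_ℂ - ⟪y, T y⟫_ℂ) ≤ ‖⟪y, S y⟫_ℂ - ⟪y, T y⟫_ℂ‖ :=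
        RCLike.re_le_norm _
      rw [map_sub, h6] at h7
      exact h7.trans (hD.trans_eq hMδ)
    have hTdef' : T.reApplyInnerSelf y = RCLike.re ⟪T y, y⟫_ℂ := rfl
    have e1 : RCLike.re ⟪S y, y⟫_ℂ = RCLike.re ⟪y, S y⟫_ℂ := inner_re_symm _ _
    have e2 : RCLike.re ⟪T y, y⟫_ℂ = RCLike.re ⟪y, T y⟫_ℂ := inner_re_symm _ _
    have hμε : ε = 1 - μ := hεdef
    rw [hTdef'] at hTy
    linarith [hSy, h5, hTy, hε, e1, e2, hμε]

lemma isPositive_of_mem {k : ℕ} {T : H →L[ℂ] H} (hT : T ∈ corankLePlusPos k) :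
    T.IsPositive := by
  obtain ⟨P, hP, -, N, hN, rfl⟩ := hT
  refine ContinuousLinearMap.IsPositive.add ?_ hN
  refine ⟨hP.1.isSymmetric, fun x => ?_⟩
  have h1 : P x = P (P x) := by
    conv_lhs => rw [← hP.2]
    rfl
  have h2 : ⟪P x, x⟫_ℂ = ⟪P x, P x⟫_ℂ := by
    conv_lhs => rw [h1]
    rw [← ContinuousLinearMap.adjoint_inner_left, hP.1.adjoint_eq]
  rw [ContinuousLinearMap.reApplyInnerSelf, h2, inner_self_eq_norm_sq]
  positivity

lemma condC_of_mem {k : ℕ} {T : H →L[ℂ] H} (hT : T ∈ corankLePlusPos k) :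
    CondC k T := by
  obtain ⟨P, hP, hrk, N, hN, rfl⟩ := hT
  intro W hW
  set K : Submodule ℂ H := LinearMap.ker (P : H →ₗ[ℂ] H) with hK
  have hKfin : FiniteDimensional ℂ K := by
    exact IsNoetherian.iff_fg.1 <| IsNoetherian.iff_rank_lt_aleph0.2 <|
      lt_of_le_of_lt hrk (Cardinal.nat_lt_aleph0 k)
  have hKrank : Module.finrank ℂ K ≤ k := Module.finrank_le_of_rank_le hrk
  have hWfin : FiniteDimensional ℂ W := FiniteDimensional.of_finrank_pos (by omega)
  have hKclosed : IsClosed (K : Set H) := ContinuousLinearMap.isClosed_ker P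
  haveI : CompleteSpace K := hKclosed.completeSpace_coe
  -- the map W → K
  let φ : W →ₗ[ℂ] K := (K.orthogonalProjectionOnto).toLinearMap.comp W.subtype
  have hφ : ¬ Function.Injective φ := by
    intro h
    have := LinearMap.finrank_le_finrank_of_injective h
    omega
  rw [← LinearMap.ker_eq_bot] at hφ
  obtain ⟨x0, hx0mem, hx0ne⟩ := Submodule.exists_mem_ne_zero_of_ne_bot hφ
  have hx0orth : (x0 : H) ∈ Kᗮ := by
    rw [LinearMap.mem_ker] at hx0mem
    have : K.orthogonalProjectionOnto (x0 : H) = 0 := hx0mem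
    exact Submodule.orthogonalProjectionOnto_eq_zero_iff.mp this
  refine ⟨x0, x0.2, by simpa using hx0ne, ?_⟩
  have hu : (x0 : H) - P x0 ∈ K := by
    rw [hK, LinearMap.mem_ker]
    have h2 : P (P (x0 : H)) = P x0 := DFunLike.congr_fun hP.2 (x0 : H)
    simp [map_sub, h2]
  have hinner : ⟪(x0 : H) - P x0, (x0 : H)⟫_ℂ = 0 :=
    (Submodule.mem_orthogonal K (x0 : H)).mp hx0orth _ hu
  have hPx : ⟪P (x0 : H), (x0 : H)⟫_ℂ = ⟪(x0 : H), (x0 : H)⟫_ℂ := by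
    have := inner_sub_left (𝕜 := ℂ) (x0 : H) (P x0) (x0 : H)
    rw [hinner] at this
    linear_combination this
  have : (P + N).reApplyInnerSelf x0 = RCLike.re ⟪P (x0:H), (x0:H)⟫_ℂ + RCLike.re ⟪N (x0:H), (x0:H)⟫_ℂ := by
    simp [ContinuousLinearMap.reApplyInnerSelf, inner_add_left]
  rw [this, hPx]
  have hN0 := hN.2 (x0 : H)
  rw [ContinuousLinearMap.reApplyInnerSelf] at hN0
  have : RCLike.re ⟪(x0:H), (x0:H)⟫_ℂ = ‖(x0:H)‖ ^ 2 := by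
    rw [inner_self_eq_norm_sq]
  rw [this]
  linarith

lemma mem_of_isPositive_of_condC {k : ℕ} {T : H →L[ℂ] H} (hT : T.IsPositive) (hC : CondC k T) :
    T ∈ corankLePlusPos k := by
  set A : H →L[ℂ] H := 1 - T with hAdef
  have hAsa : IsSelfAdjoint A := (IsSelfAdjoint.one (R := H →L[ℂ] H)).sub hT.isSelfAdjoint
  set Ap : H →L[ℂ] H := cfc (fun t : ℝ => max t 0) A with hApdef
  set Am : H →L[ℂ] H := cfc (fun t : ℝ => max (-t) 0) A with hAmdef
  set B : H →L[ℂ] H := cfc (fun t : ℝ => Real.sqrt (max t 0)) A with hBdef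
  have hApsa : IsSelfAdjoint Ap := cfc_predicate _ A
  have hBsa : IsSelfAdjoint B := cfc_predicate _ A
  have hsub : Ap - Am = A := by
    rw [hApdef, hAmdef, ← cfc_sub (fun t : ℝ => max t 0) (fun t : ℝ => max (-t) 0) A
      (by fun_prop) (by fun_prop)]
    have : (fun t : ℝ => max t 0 - max (-t) 0) = (id : ℝ → ℝ) := by
      ext t
      rcases le_total t 0 with h | h
      · simp [max_eq_right h, max_eq_left (neg_nonneg.mpr h)]
      · simp [max_eq_left h, max_eq_right (neg_nonpos.mpr h)]
    rw [this, cfc_id ℝ A]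
  have hBB : B * B = Ap := by
    rw [hBdef, hApdef, ← cfc_mul _ _ A (by fun_prop) (by fun_prop)]
    congr 1
    ext t
    exact Real.mul_self_sqrt (le_max_right _ _)
  have hmul : Ap * Am = 0 := by
    rw [hApdef, hAmdef, ← cfc_mul _ _ A (by fun_prop) (by fun_prop)]
    have : (fun t : ℝ => max t 0 * max (-t) 0) = (fun _ : ℝ => (0:ℝ)) := by
      ext t
      rcases le_total t 0 with h | h
      · simp [max_eq_right h]
      · simp [max_eq_right (neg_nonpos.mpr h)]
    rw [this]
    exact cfc_const_zero ℝ A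
  have hAmpos : (0 : H →L[ℂ] H) ≤ Am := cfc_nonneg (fun t _ => le_max_right _ _)
  -- `re ⟪Ap x, x⟫ = ‖B x‖ ^ 2`
  have hApx : ∀ x : H, RCLike.re ⟪Ap x, x⟫_ℂ = ‖B x‖ ^ 2 := by
    intro x
    have h1 : Ap x = B (B x) := by rw [← hBB]; rfl
    have h2 := ContinuousLinearMap.adjoint_inner_left B x (B x)
    rw [hBsa.adjoint_eq] at h2
    rw [h1, h2, inner_self_eq_norm_sq]
  -- kernel of Ap
  set K : Submodule ℂ H := LinearMap.ker (Ap : H →ₗ[ℂ] H) with hKdef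
  have hKmem : ∀ x : H, x ∈ K ↔ Ap x = 0 := fun x => Iff.rfl
  haveI : CompleteSpace K := (ContinuousLinearMap.isClosed_ker Ap).completeSpace_coe
  -- 1. for x ∈ Kᗮ, re ⟪A x, x⟫ = re ⟪Ap x, x⟫
  have hAeqAp : ∀ x : H, x ∈ Kᗮ → ⟪A x, x⟫_ℂ = ⟪Ap x, x⟫_ℂ := by
    intro x hx
    have hAm : Am x ∈ K := by
      rw [hKmem]
      have : Ap (Am x) = (Ap * Am) x := rfl
      rw [this, hmul]; rfl
    have h0 : ⟪Am x, x⟫_ℂ = 0 := (Submodule.mem_orthogonal K x).mp hx _ hAm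
    have : ⟪A x, x⟫_ℂ = ⟪Ap x, x⟫_ℂ - ⟪Am x, x⟫_ℂ := by
      rw [← hsub]
      simp [inner_sub_left]
    rw [this, h0, sub_zero]
  -- 2. rank bound for Kᗮ
  have hrank : Module.rank ℂ ↥Kᗮ ≤ k := by
    by_contra hcon
    push_neg at hcon
    have hle : ((k + 1 : ℕ) : Cardinal) ≤ Module.rank ℂ ↥Kᗮ := by
      calc ((k + 1 : ℕ) : Cardinal) = (k : Cardinal) + 1 := by push_cast; ring
        _ ≤ Order.succ (k : Cardinal) := Cardinal.add_one_le_succ _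
        _ ≤ Module.rank ℂ ↥Kᗮ := Order.succ_le_of_lt hcon
    obtain ⟨s, hcard, hind⟩ := le_rank_iff_exists_linearIndependent_finset.mp hle
    -- reindex by Fin (k+1)
    let e : Fin (k + 1) ≃ ↥(s : Set ↥Kᗮ) :=
      ((finCongr hcard.symm).trans s.equivFin.symm).trans
        (Equiv.subtypeEquivProp (by simp))
    let f : Fin (k + 1) → ↥Kᗮ := fun i => (e i : ↥Kᗮ)
    have hf : LinearIndependent ℂ f := hind.comp e e.injective
    let g : Fin (k + 1) → H := fun i => ((f i : ↥Kᗮ) : H)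
    have hg : LinearIndependent ℂ g := hf.map' Kᗮ.subtype (Submodule.ker_subtype _)
    set W : Submodule ℂ H := Submodule.span ℂ (Set.range g) with hWdef
    have hWle : W ≤ Kᗮ := by
      rw [hWdef, Submodule.span_le]
      rintro - ⟨i, rfl⟩
      exact (f i).2
    have hWrank : Module.finrank ℂ W = k + 1 := by
      rw [hWdef, finrank_span_eq_card hg, Fintype.card_fin]
    obtain ⟨x, hxW, hxne, hxT⟩ := hC W hWrank
    have hxorth : x ∈ Kᗮ := hWle hxW
    have h1 : RCLike.re ⟪A x, x⟫_ℂ = ‖x‖ ^ 2 - T.reApplyInnerSelf x := by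
      have hsplit : ⟪A x, x⟫_ℂ = ⟪x, x⟫_ℂ - ⟪T x, x⟫_ℂ := by
        rw [hAdef]
        simp only [ContinuousLinearMap.sub_apply, ContinuousLinearMap.one_apply, inner_sub_left]
      rw [hsplit, map_sub, inner_self_eq_norm_sq, ContinuousLinearMap.reApplyInnerSelf]
    have h2 : ‖B x‖ ^ 2 ≤ 0 := by
      rw [← hApx x, ← hAeqAp x hxorth, h1]
      linarith
    have hBx : B x = 0 := by
      have := norm_nonneg (B x)
      have : ‖B x‖ = 0 := by nlinarith
      exact norm_eq_zero.mp this
    have hApx0 : Ap x = 0 := by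
      have : Ap x = B (B x) := by rw [← hBB]; rfl
      rw [this, hBx, map_zero]
    have hxK : x ∈ K := (hKmem x).mpr hApx0
    have : ⟪x, x⟫_ℂ = 0 := (Submodule.mem_orthogonal K x).mp hxorth x hxK
    exact hxne (inner_self_eq_zero.mp this)
  -- the projector
  set P : H →L[ℂ] H := K.subtypeL ∘L K.orthogonalProjectionOnto with hPdef
  have hPapply : ∀ x : H, P x = (K.orthogonalProjectionOnto x : H) := fun x => rfl
  have hPsa : IsSelfAdjoint P := isSelfAdjoint_starProjection K
  have hPidem : P ∘L P = P := by
    ext x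
    exact congrArg Subtype.val (Submodule.orthogonalProjectionOnto_mem_subspace_eq_self _)
  have hker : LinearMap.ker (P : H →ₗ[ℂ] H) = Kᗮ := by
    ext x
    rw [LinearMap.mem_ker]
    have : (P : H →ₗ[ℂ] H) x = (K.orthogonalProjectionOnto x : H) := rfl
    rw [this]
    rw [ZeroMemClass.coe_eq_zero]
    exact Submodule.orthogonalProjectionOnto_eq_zero_iff
  refine ⟨P, ⟨hPsa, hPidem⟩, ?_, T - P, ⟨(hT.isSelfAdjoint.sub hPsa).isSymmetric, ?_⟩, by abel⟩
  · rw [opCorank, hker]; exact hrank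
  · -- positivity of T - P
    intro x
    set u : H := (K.orthogonalProjectionOnto x : H) with hu
    have huK : u ∈ K := (K.orthogonalProjectionOnto x).2
    set v : H := x - u with hv
    have hvorth : v ∈ Kᗮ := K.sub_starProjection_mem_orthogonal x
    have hxuv : x = u + v := by rw [hv]; abel
    have huv : ⟪u, v⟫_ℂ = 0 := (Submodule.mem_orthogonal K v).mp hvorth u huK
    -- re ⟪P x, x⟫ = ‖u‖ ^ 2
    have hPx : RCLike.re ⟪P x, x⟫_ℂ = ‖u‖ ^ 2 := by
      rw [hPapply, ← hu]
      conv_lhs => rw [hxuv]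
      rw [inner_add_right, huv, add_zero, inner_self_eq_norm_sq]
    -- ‖x‖ ^ 2 = ‖u‖ ^ 2 + ‖v‖ ^ 2
    have hpyth : ‖x‖ ^ 2 = ‖u‖ ^ 2 + ‖v‖ ^ 2 := by
      rw [hxuv, norm_add_sq (𝕜 := ℂ)]
      rw [huv]
      simp
    -- re ⟪A x, x⟫ ≤ re ⟪Ap x, x⟫
    have hAle : RCLike.re ⟪A x, x⟫_ℂ ≤ RCLike.re ⟪Ap x, x⟫_ℂ := by
      have hAm := (ContinuousLinearMap.nonneg_iff_isPositive Am).mp hAmpos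
      have h0 := hAm.inner_nonneg_left x
      have : ⟪Am x, x⟫_ℂ = ⟪Ap x, x⟫_ℂ - ⟪A x, x⟫_ℂ := by
        have hAm2 : Am = Ap - A := by rw [← hsub]; abel
        rw [hAm2]
        simp [inner_sub_left]
      rw [this] at h0
      replace h0 : 0 ≤ RCLike.re (⟪Ap x, x⟫_ℂ - ⟪A x, x⟫_ℂ) := (RCLike.nonneg_iff.mp h0).1
      simp only [map_sub] at h0
      linarith
    -- re ⟪Ap x, x⟫ = re ⟪Ap v, v⟫
    have hApdecomp : ⟪Ap x, x⟫_ℂ = ⟪Ap v, v⟫_ℂ := by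
      have hApu : Ap u = 0 := (hKmem u).mp huK
      conv_lhs => rw [hxuv]
      rw [map_add, inner_add_left, inner_add_right, inner_add_right, hApu]
      have h1 : ⟪Ap v, u⟫_ℂ = 0 := by
        rw [← hApsa.adjoint_eq, ContinuousLinearMap.adjoint_inner_left, hApu, inner_zero_right]
      simp [h1]
    -- re ⟪Ap v, v⟫ = re ⟪A v, v⟫ ≤ ‖v‖^2
    have hApv : RCLike.re ⟪Ap v, v⟫_ℂ ≤ ‖v‖ ^ 2 := by
      rw [← hAeqAp v hvorth]
      have h1 : RCLike.re ⟪A v, v⟫_ℂ = ‖v‖ ^ 2 - T.reApplyInnerSelf v := by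
        have hsplit : ⟪A v, v⟫_ℂ = ⟪v, v⟫_ℂ - ⟪T v, v⟫_ℂ := by
          rw [hAdef]
          simp only [ContinuousLinearMap.sub_apply, ContinuousLinearMap.one_apply, inner_sub_left]
        rw [hsplit, map_sub, inner_self_eq_norm_sq, ContinuousLinearMap.reApplyInnerSelf]
      have h2 := hT.2 v
      linarith
    -- conclude
    have hTx : ‖u‖ ^ 2 ≤ T.reApplyInnerSelf x := by
      have hAx : RCLike.re ⟪A x, x⟫_ℂ = ‖x‖ ^ 2 - T.reApplyInnerSelf x := by
        have hsplit : ⟪A x, x⟫_ℂ = ⟪x, x⟫_ℂ - ⟪T x, x⟫_ℂ := by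
          rw [hAdef]
          simp only [ContinuousLinearMap.sub_apply, ContinuousLinearMap.one_apply, inner_sub_left]
        rw [hsplit, map_sub, inner_self_eq_norm_sq, ContinuousLinearMap.reApplyInnerSelf]
      have := hAle
      rw [hApdecomp] at this
      rw [hAx] at this
      have h3 := hApv
      nlinarith [hpyth]
    show 0 ≤ (T - P).reApplyInnerSelf x
    have : (T - P).reApplyInnerSelf x = T.reApplyInnerSelf x - RCLike.re ⟪P x, x⟫_ℂ := by
      simp [ContinuousLinearMap.reApplyInnerSelf, inner_sub_left]
    rw [this, hPx]
    linarith

/-- For a separable Hilbert space `H` and `k ∈ ℕ`, the set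
`Π₋ₖ⁺ = Π₋ₖ + P⁺(H)` (projectors of corank at most `k` plus positive operators) is closed in
the weak operator topology: its WOT-closure equals itself. -/
theorem corankLePlusPos_wot_closed
    [TopologicalSpace.SeparableSpace H] (k : ℕ) :
    closure ((ContinuousLinearMapWOT.ofCLM : (H →L[ℂ] H) → H →WOT[ℂ] H) '' corankLePlusPos (H := H) k) =
      (ContinuousLinearMapWOT.ofCLM : (H →L[ℂ] H) → H →WOT[ℂ] H) '' corankLePlusPos (H := H) k := by
  refine Set.Subset.antisymm ?_ subset_closure
  intro w hw
  obtain ⟨T, rfl⟩ := ContinuousLinearMapWOT.ofCLM_surjective w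
  suffices hmem : T ∈ corankLePlusPos (H := H) k from Set.mem_image_of_mem _ hmem
  obtain ⟨hTpos, hTc⟩ := wot_closure_aux k (corankLePlusPos k)
    (fun S hS => isPositive_of_mem hS) (fun S hS => condC_of_mem hS) T hw
  exact mem_of_isPositive_of_condC hTpos hTc

end
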